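/- arXiv:2206.04755 — 4 statements merged into one kernel-verified Lean document; each statement's English description precedes it below -/
import Mathlib

section
/- Let (X,φ) be an expansive dynamical system and fix 0 < ε ≤ ε_X/2. Then the set D_ε = {(x,y) ∈ X × X : Xˢ(x,ε) ∩ Xᵘ(y,ε) ≠ ∅} is closed in X × X, contains the diagonal, and the bracket map [·,·] : D_ε → X defined by [x,y] ∈ Xˢ(x,ε) ∩ Xᵘ(y,ε) is continuous and satisfies [x,x] = x for all x ∈ X. -/
open Filter Topology Set

namespace Paper

variable {X : Type*} [MetricSpace X] [CompactSpace X]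

/-- The `n`-th iterate (for `n : ℤ`) of the homeomorphism `φ`. -/
def It (φ : X ≃ₜ X) (n : ℤ) : X → X := fun x => (φ.toEquiv ^ n) x

/-- The local stable set `Xˢ(x, ε)`. -/
def locS (φ : X ≃ₜ X) (x : X) (ε : ℝ) : Set X :=
  {y | ∀ n : ℕ, dist (It φ n x) (It φ n y) ≤ ε}

/-- The local unstable set `Xᵘ(x, ε)`. -/
def locU (φ : X ≃ₜ X) (x : X) (ε : ℝ) : Set X :=
  {y | ∀ n : ℕ, dist (It φ (-(n : ℤ)) x) (It φ (-(n : ℤ)) y) ≤ ε}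

/-- The set `D_ε` on which the bracket is defined. -/
def Dset (φ : X ≃ₜ X) (ε : ℝ) : Set (X × X) :=
  {p | (locS φ p.1 ε ∩ locU φ p.2 ε).Nonempty}

/-- `(X, φ)` is expansive with expansiveness constant `εX`. -/
def IsExpansive (φ : X ≃ₜ X) (εX : ℝ) : Prop :=
  0 < εX ∧ ∀ x y : X, (∀ n : ℤ, dist (It φ n x) (It φ n y) ≤ εX) → x = y

/-- The metric is adapted (Fried), with constants `η` and `lam`. -/
def IsAdapted (φ : X ≃ₜ X) (η lam : ℝ) : Prop :=
  0 < η ∧ 0 < lam ∧ lam < 1 ∧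
    (∀ x y : X, y ∈ locS φ x η → dist (φ x) (φ y) ≤ lam * dist x y) ∧
    (∀ x y : X, y ∈ locU φ x η → dist (φ.symm x) (φ.symm y) ≤ lam * dist x y)

/-- `p` is a periodic point of `φ`. -/
def IsPeriodic (φ : X ≃ₜ X) (p : X) : Prop :=
  ∃ n : ℕ, 1 ≤ n ∧ It φ n p = p

/-- `x` is a synchronizing point: `(x, x)` is in the interior of `D_ε` for
some `0 < ε ≤ ε₀`. -/
def IsSyncPt (φ : X ≃ₜ X) (ε₀ : ℝ) (x : X) : Prop :=
  ∃ ε : ℝ, 0 < ε ∧ ε ≤ ε₀ ∧ (x, x) ∈ interior (Dset φ ε)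

/-- `(X, φ)` is irreducible. -/
def Irred (φ : X ≃ₜ X) : Prop :=
  ∀ U V : Set X, IsOpen U → IsOpen V → U.Nonempty → V.Nonempty →
    ∃ n : ℕ, 0 < n ∧ (It φ n '' U ∩ V).Nonempty

/-- `(X, φ)` is mixing. -/
def Mixing (φ : X ≃ₜ X) : Prop :=
  ∀ U V : Set X, IsOpen U → IsOpen V → U.Nonempty → V.Nonempty →
    ∃ N : ℕ, ∀ n : ℕ, N ≤ n → (It φ n '' U ∩ V).Nonempty

/-- Every point of `(X, φ)` is non-wandering. -/
def NonWandering (φ : X ≃ₜ X) : Prop :=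
  ∀ x : X, ∀ U ∈ 𝓝 x, ∃ n : ℕ, 0 < n ∧ (It φ n '' U ∩ U).Nonempty

/-- Stable equivalence `x ∼ₛ y`. -/
def StableEq (φ : X ≃ₜ X) (x y : X) : Prop :=
  Tendsto (fun n : ℕ => dist (It φ n x) (It φ n y)) atTop (𝓝 0)

/-- Unstable equivalence `x ∼ᵤ y`. -/
def UnstableEq (φ : X ≃ₜ X) (x y : X) : Prop :=
  Tendsto (fun n : ℕ => dist (It φ (-(n : ℤ)) x) (It φ (-(n : ℤ)) y)) atTop (𝓝 0)

/-- Local conjugacy `x ∼_lc y`: a homeomorphism `γ : U → V` of open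
neighborhoods with `γ x = y` and `sup_{z ∈ U} d(φⁿ z, φⁿ (γ z)) → 0` as
`n → ±∞`. -/
def LocConj (φ : X ≃ₜ X) (x y : X) : Prop :=
  ∃ (U V : Set X) (γ γinv : X → X),
    IsOpen U ∧ IsOpen V ∧ x ∈ U ∧ y ∈ V ∧ γ x = y ∧
    Set.MapsTo γ U V ∧ Set.MapsTo γinv V U ∧
    (∀ z ∈ U, γinv (γ z) = z) ∧ (∀ w ∈ V, γ (γinv w) = w) ∧
    ContinuousOn γ U ∧ ContinuousOn γinv V ∧
    (∀ ε : ℝ, 0 < ε → ∃ N : ℕ, ∀ n : ℤ, (N : ℤ) ≤ |n| → ∀ z ∈ U,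
      dist (It φ n z) (It φ n (γ z)) ≤ ε)

/-- Stable local conjugacy `x ∼_lcs y`: a homeomorphism of `Xᵘ(x, δ)` onto
its image in `Xᵘ(y, δ')` sending `x` to `y`, uniformly asymptotic in forward
time. -/
def StableLC (φ : X ≃ₜ X) (x y : X) : Prop :=
  ∃ (δ δ' : ℝ) (γ : X → X), 0 < δ ∧ 0 < δ' ∧
    Set.MapsTo γ (locU φ x δ) (locU φ y δ') ∧
    Set.InjOn γ (locU φ x δ) ∧ ContinuousOn γ (locU φ x δ) ∧ γ x = y ∧
    (∀ ε : ℝ, 0 < ε → ∃ N : ℕ, ∀ n : ℕ, N ≤ n → ∀ z ∈ locU φ x δ,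
      dist (It φ n z) (It φ n (γ z)) ≤ ε)

/-- Unstable local conjugacy `x ∼_lcu y`: a homeomorphism of `Xˢ(x, δ)` onto
its image in `Xˢ(y, δ')` sending `x` to `y`, uniformly asymptotic in backward
time. -/
def UnstableLC (φ : X ≃ₜ X) (x y : X) : Prop :=
  ∃ (δ δ' : ℝ) (γ : X → X), 0 < δ ∧ 0 < δ' ∧
    Set.MapsTo γ (locS φ x δ) (locS φ y δ') ∧
    Set.InjOn γ (locS φ x δ) ∧ ContinuousOn γ (locS φ x δ) ∧ γ x = y ∧
    (∀ ε : ℝ, 0 < ε → ∃ N : ℕ, ∀ n : ℕ, N ≤ n → ∀ z ∈ locS φ x δ,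
      dist (It φ (-(n : ℤ)) z) (It φ (-(n : ℤ)) (γ z)) ≤ ε)

/-! The triples `((x, y), z)` with `z ∈ Xˢ(x, ε) ∩ Xᵘ(y, ε)` form a closed subset of
`(X × X) × X`, being cut out by countably many non-strict inequalities between continuous
functions. As `X` is compact, its projection `D_ε` is closed, and by expansiveness it is the
graph of the bracket over `D_ε`; a map into a compact space with closed graph is continuous. -/

lemma continuousOn_of_isClosed_graph {α β : Type*} [TopologicalSpace α] [TopologicalSpace β]
    [CompactSpace β] {f : α → β} {s : Set α} {G : Set (α × β)} (hG : IsClosed G)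
    (hfG : ∀ a ∈ s, ∀ b, (a, b) ∈ G ↔ b = f a) : ContinuousOn f s := by
  rw [continuousOn_iff_continuous_domRestrict, continuous_iff_isClosed]
  intro C hC
  have hpre : s.domRestrict f ⁻¹' C = Subtype.val ⁻¹' (Prod.fst '' (G ∩ Prod.snd ⁻¹' C)) := by
    ext ⟨a, ha⟩
    simp [Set.domRestrict, hfG a ha]
  rw [hpre]
  exact (isClosedMap_fst_of_compactSpace _ (hG.inter (hC.preimage continuous_snd))).preimage
    continuous_subtype_val

omit [CompactSpace X] in
lemma It_eq_coe_zpow (φ : X ≃ₜ X) (n : ℤ) : It φ n = ⇑(φ ^ n) := by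
  let toPerm : (X ≃ₜ X) →* Equiv.Perm X :=
    { toFun := Homeomorph.toEquiv, map_one' := rfl, map_mul' := fun _ _ => rfl }
  exact congrArg DFunLike.coe (map_zpow toPerm φ n).symm

omit [CompactSpace X] in
@[fun_prop]
lemma continuous_It (φ : X ≃ₜ X) (n : ℤ) : Continuous (It φ n) := by
  rw [It_eq_coe_zpow]
  exact (φ ^ n).continuous

omit [CompactSpace X] in
lemma self_mem_locS (φ : X ≃ₜ X) (x : X) {ε : ℝ} (hε : 0 ≤ ε) : x ∈ locS φ x ε :=
  fun n => by simpa using hε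

omit [CompactSpace X] in
lemma self_mem_locU (φ : X ≃ₜ X) (x : X) {ε : ℝ} (hε : 0 ≤ ε) : x ∈ locU φ x ε :=
  fun n => by simpa using hε

omit [CompactSpace X] in
lemma IsExpansive.eq_of_mem_locS_inter_locU {φ : X ≃ₜ X} {εX ε : ℝ} (hexp : IsExpansive φ εX)
    (hε : ε ≤ εX / 2) {x y z w : X}
    (hz : z ∈ locS φ x ε ∩ locU φ y ε) (hw : w ∈ locS φ x ε ∩ locU φ y ε) : z = w := by
  refine hexp.2 z w fun n => ?_
  obtain ⟨m, rfl | rfl⟩ := Int.eq_nat_or_neg n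
  · calc _ ≤ dist (It φ m x) (It φ m z) + dist (It φ m x) (It φ m w) := dist_triangle_left _ _ _
      _ ≤ εX := by linarith [hz.1 m, hw.1 m]
  · calc _ ≤ dist (It φ (-m) y) (It φ (-m) z) + dist (It φ (-m) y) (It φ (-m) w) :=
          dist_triangle_left _ _ _
      _ ≤ εX := by linarith [hz.2 m, hw.2 m]

def bracketGraph (φ : X ≃ₜ X) (ε : ℝ) : Set ((X × X) × X) :=
  {q | q.2 ∈ locS φ q.1.1 ε ∩ locU φ q.1.2 ε}

omit [CompactSpace X] in
lemma isClosed_bracketGraph (φ : X ≃ₜ X) (ε : ℝ) : IsClosed (bracketGraph φ ε) := by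
  simp only [bracketGraph, locS, locU, mem_inter_iff, mem_iInter, mem_ofPred_eq, ofPred_and,
    ofPred_forall]
  refine (isClosed_iInter fun n => isClosed_le ?_ continuous_const).inter
    (isClosed_iInter fun n => isClosed_le ?_ continuous_const) <;> fun_prop

lemma isClosed_Dset (φ : X ≃ₜ X) (ε : ℝ) : IsClosed (Dset φ ε) := by
  have hD : Dset φ ε = Prod.fst '' bracketGraph φ ε := by
    ext p
    exact ⟨fun ⟨z, hz⟩ => ⟨(p, z), hz, rfl⟩, fun ⟨q, hq, hqp⟩ => hqp ▸ ⟨q.2, hq⟩⟩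
  rw [hD]
  exact isClosedMap_fst_of_compactSpace _ (isClosed_bracketGraph φ ε)

/-- `D_ε` is closed, contains the diagonal, and the bracket map
is continuous on `D_ε` with `[x,x] = x`. -/
theorem Dset_closed_bracket_continuous (φ : X ≃ₜ X) (εX : ℝ)
    (hexp : IsExpansive φ εX) (ε : ℝ) (hε : 0 < ε) (hε2 : ε ≤ εX / 2)
    (br : X → X → X)
    (hbr : ∀ x y : X, (x, y) ∈ Dset φ ε → br x y ∈ locS φ x ε ∩ locU φ y ε) :
    IsClosed (Dset φ ε) ∧ (∀ x : X, (x, x) ∈ Dset φ ε) ∧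
      ContinuousOn (fun p : X × X => br p.1 p.2) (Dset φ ε) ∧
      ∀ x : X, br x x = x := by
  have hdiag (x : X) : x ∈ locS φ x ε ∩ locU φ x ε :=
    ⟨self_mem_locS φ x hε.le, self_mem_locU φ x hε.le⟩
  have hbr_unique {p : X × X} (hp : p ∈ Dset φ ε) {z : X}
      (hz : z ∈ locS φ p.1 ε ∩ locU φ p.2 ε) : z = br p.1 p.2 :=
    hexp.eq_of_mem_locS_inter_locU hε2 hz (hbr p.1 p.2 hp)
  refine ⟨isClosed_Dset φ ε, fun x => ⟨x, hdiag x⟩, ?_, fun x =>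
    (hbr_unique (p := (x, x)) ⟨x, hdiag x⟩ (hdiag x)).symm⟩
  exact continuousOn_of_isClosed_graph (isClosed_bracketGraph φ ε)
    fun p hp z => ⟨hbr_unique hp, fun hz => hz ▸ hbr p.1 p.2 hp⟩

end Paper
end

section
/- Let (X,φ) be an expansive dynamical system. A point x ∈ X is synchronizing if and only if φ(x) is synchronizing. -/
open Filter Topology Set

namespace Paper

variable {X : Type*} [MetricSpace X] [CompactSpace X]

lemma it_add (φ : X ≃ₜ X) (m n : ℤ) (w : X) : It φ (m + n) w = It φ m (It φ n w) := by
  simp [It, zpow_add, Equiv.Perm.mul_apply]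

lemma it_one (φ : X ≃ₜ X) (w : X) : It φ 1 w = φ w := by simp [It]

lemma it_neg_one (φ : X ≃ₜ X) (w : X) : It φ (-1) w = φ.symm w := by
  simp [It, zpow_neg, zpow_one]

lemma it_phi (φ : X ≃ₜ X) (m : ℤ) (w : X) : It φ m (φ w) = It φ (m + 1) w := by
  rw [it_add, it_one]

lemma it_symm (φ : X ≃ₜ X) (m : ℤ) (w : X) : It φ m (φ.symm w) = It φ (m - 1) w := by
  rw [show m - 1 = m + (-1) by ring, it_add, it_neg_one]

lemma sync_fwd (φ : X ≃ₜ X) (η lam ε : ℝ) (had : IsAdapted φ η lam)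
    (hε : 0 < ε) (hεη : ε ≤ η) (x : X) (hx : (x, x) ∈ interior (Dset φ ε)) :
    (φ x, φ x) ∈ interior (Dset φ ε) := by
  obtain ⟨hη, hlam0, hlam1, hS, hU⟩ := had
  set c : ℝ := (1 - lam) * ε / 2 with hc
  have hcpos : 0 < c := by
    have h1 : 0 < 1 - lam := by linarith
    positivity
  obtain ⟨r, hr, hcont⟩ : ∃ r > 0, ∀ a : X, dist a x < r → dist (φ a) (φ x) < c := by
    have := Metric.continuousAt_iff.mp (φ.continuous.continuousAt (x := x))
    obtain ⟨r, hr, h⟩ := this c hcpos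
    exact ⟨r, hr, fun a ha => h ha⟩
  set V : Set (X × X) := interior (Dset φ ε) ∩ (Metric.ball x r ×ˢ Metric.ball x r) with hV
  have hVopen : IsOpen V := isOpen_interior.inter ((Metric.isOpen_ball).prod Metric.isOpen_ball)
  have hxV : (x, x) ∈ V := ⟨hx, by simp [Metric.mem_ball, hr]⟩
  refine mem_interior.mpr ⟨(Homeomorph.prodCongr φ φ) '' V, ?_, ?_, ⟨(x, x), hxV, rfl⟩⟩
  · rintro p ⟨⟨a, b⟩, ⟨hab, ha, hb⟩, rfl⟩
    obtain ⟨z, hzS, hzU⟩ := interior_subset hab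
    have hdaz : dist a z ≤ ε := by have := hzS 0; simpa [It] using this
    have hzSη : z ∈ locS φ a η := fun n => le_trans (hzS n) hεη
    refine ⟨φ z, fun n => ?_, fun n => ?_⟩
    · show dist (It φ n (φ a)) (It φ n (φ z)) ≤ ε
      rw [it_phi, it_phi]
      have := hzS (n + 1)
      simpa [add_comm] using this
    · show dist (It φ (-(n : ℤ)) (φ b)) (It φ (-(n : ℤ)) (φ z)) ≤ ε
      cases n with
      | zero =>
        simp only [Nat.cast_zero, neg_zero, It, zpow_zero, Equiv.Perm.one_apply]
        have h1 : dist (φ b) (φ x) < c := hcont b (by simpa [Metric.mem_ball] using hb)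
        have h2 : dist (φ x) (φ a) < c := by
          rw [dist_comm]; exact hcont a (by simpa [Metric.mem_ball] using ha)
        have h3 : dist (φ a) (φ z) ≤ lam * ε := by
          have := hS a z hzSη
          nlinarith
        calc dist (φ b) (φ z) ≤ dist (φ b) (φ x) + dist (φ x) (φ a) + dist (φ a) (φ z) :=
              dist_triangle4 _ _ _ _
          _ ≤ ε := by simp only [hc] at h1 h2; nlinarith
      | succ n =>
        rw [it_phi, it_phi]
        have : (-((n : ℤ) + 1) + 1) = -(n : ℤ) := by push_cast; ring
        rw [show (-((n + 1 : ℕ) : ℤ) + 1) = -(n : ℤ) by push_cast; ring]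
        exact hzU n
  · exact (Homeomorph.isOpen_image _).mpr hVopen

lemma sync_bwd (φ : X ≃ₜ X) (η lam ε : ℝ) (had : IsAdapted φ η lam)
    (hε : 0 < ε) (hεη : ε ≤ η) (x : X) (hx : (φ x, φ x) ∈ interior (Dset φ ε)) :
    (x, x) ∈ interior (Dset φ ε) := by
  obtain ⟨hη, hlam0, hlam1, hS, hU⟩ := had
  set c : ℝ := (1 - lam) * ε / 2 with hc
  have hcpos : 0 < c := by
    have h1 : 0 < 1 - lam := by linarith
    positivity
  obtain ⟨r, hr, hcont⟩ :
      ∃ r > 0, ∀ a : X, dist a (φ x) < r → dist (φ.symm a) (φ.symm (φ x)) < c := by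
    have := Metric.continuousAt_iff.mp (φ.symm.continuous.continuousAt (x := φ x))
    obtain ⟨r, hr, h⟩ := this c hcpos
    exact ⟨r, hr, fun a ha => h ha⟩
  set V : Set (X × X) := interior (Dset φ ε) ∩ (Metric.ball (φ x) r ×ˢ Metric.ball (φ x) r)
    with hV
  have hVopen : IsOpen V := isOpen_interior.inter ((Metric.isOpen_ball).prod Metric.isOpen_ball)
  have hxV : (φ x, φ x) ∈ V := ⟨hx, by simp [Metric.mem_ball, hr]⟩
  have hxx : (x, x) = (Homeomorph.prodCongr φ.symm φ.symm) (φ x, φ x) := by simp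
  refine mem_interior.mpr
    ⟨(Homeomorph.prodCongr φ.symm φ.symm) '' V, ?_, ?_, ⟨(φ x, φ x), hxV, hxx.symm⟩⟩
  · rintro p ⟨⟨a, b⟩, ⟨hab, ha, hb⟩, rfl⟩
    obtain ⟨z, hzS, hzU⟩ := interior_subset hab
    have hdbz : dist b z ≤ ε := by have := hzU 0; simpa [It] using this
    have hzUη : z ∈ locU φ b η := fun n => le_trans (hzU n) hεη
    refine ⟨φ.symm z, fun n => ?_, fun n => ?_⟩
    · show dist (It φ n (φ.symm a)) (It φ n (φ.symm z)) ≤ ε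
      cases n with
      | zero =>
        simp only [Nat.cast_zero, It, zpow_zero, Equiv.Perm.one_apply]
        have h1 : dist (φ.symm a) (φ.symm (φ x)) < c :=
          hcont a (by simpa [Metric.mem_ball] using ha)
        have h2 : dist (φ.symm (φ x)) (φ.symm b) < c := by
          rw [dist_comm]; exact hcont b (by simpa [Metric.mem_ball] using hb)
        have h3 : dist (φ.symm b) (φ.symm z) ≤ lam * ε := by
          have := hU b z hzUη
          nlinarith
        calc dist (φ.symm a) (φ.symm z)
            ≤ dist (φ.symm a) (φ.symm (φ x)) + dist (φ.symm (φ x)) (φ.symm b)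
              + dist (φ.symm b) (φ.symm z) := dist_triangle4 _ _ _ _
          _ ≤ ε := by simp only [hc] at h1 h2; nlinarith
      | succ n =>
        rw [it_symm, it_symm, show (((n + 1 : ℕ) : ℤ) - 1) = (n : ℤ) by push_cast; ring]
        exact hzS n
    · show dist (It φ (-(n : ℤ)) (φ.symm b)) (It φ (-(n : ℤ)) (φ.symm z)) ≤ ε
      rw [it_symm, it_symm, show (-(n : ℤ) - 1) = -((n + 1 : ℕ) : ℤ) by push_cast; ring]
      exact hzU (n + 1)
  · exact (Homeomorph.isOpen_image _).mpr hVopen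

/-- `x` is synchronizing iff `φ x` is synchronizing. -/
theorem syncPt_iff_syncPt_apply (φ : X ≃ₜ X) (εX η lam : ℝ)
    (hexp : IsExpansive φ εX) (had : IsAdapted φ η lam) (x : X) :
    IsSyncPt φ (min η (εX / 2)) x ↔ IsSyncPt φ (min η (εX / 2)) (φ x) := by
  constructor
  · rintro ⟨ε, hεp, hεle, hint⟩
    exact ⟨ε, hεp, hεle, sync_fwd φ η lam ε had hεp (hεle.trans (min_le_left _ _)) x hint⟩
  · rintro ⟨ε, hεp, hεle, hint⟩
    exact ⟨ε, hεp, hεle, sync_bwd φ η lam ε had hεp (hεle.trans (min_le_left _ _)) x hint⟩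

end Paper
end

section
/- If (X,φ) is a synchronizing dynamical system, then the set X_sync of synchronizing points is open and dense in X. -/
open Filter Topology Set

/-!
Being synchronizing is an interior condition on the diagonal, hence open. It is preserved by
`φ`: if `z ∈ Xˢ(x, ε) ∩ Xᵘ(y, ε)`, then `φ z ∈ Xˢ(φ x, ε)`, and since the adapted metric
contracts `Xˢ(x, ε)` by `lam`, also `φ z ∈ Xᵘ(φ y, ε)` as soon as `d(φ x, φ y) ≤ (1 - lam) ε`.
A nonempty open forward-invariant set is dense in an irreducible system, because some forward
image of it meets every nonempty open set.
-/

namespace Paper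

variable {X : Type*} [MetricSpace X] {φ : X ≃ₜ X} {x y : X} {ε ε₀ η lam : ℝ}

lemma It_natCast (φ : X ≃ₜ X) (n : ℕ) : It φ n = φ^[n] := by
  unfold It
  simp only [zpow_natCast, Equiv.Perm.coe_pow]
  rfl

lemma It_neg_natCast (φ : X ≃ₜ X) (n : ℕ) : It φ (-(n : ℤ)) = φ.symm^[n] := by
  unfold It
  simp only [zpow_neg, zpow_natCast, ← inv_pow, Equiv.Perm.coe_pow]
  rfl

lemma mem_locS_iff : y ∈ locS φ x ε ↔ ∀ n : ℕ, dist (φ^[n] x) (φ^[n] y) ≤ ε := by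
  simp only [locS, It_natCast, mem_ofPred_eq]

lemma mem_locU_iff : y ∈ locU φ x ε ↔ ∀ n : ℕ, dist (φ.symm^[n] x) (φ.symm^[n] y) ≤ ε := by
  simp only [locU, It_neg_natCast, mem_ofPred_eq]

lemma apply_mem_locS (hy : y ∈ locS φ x ε) : φ y ∈ locS φ (φ x) ε :=
  mem_locS_iff.2 fun n => by
    simpa only [Function.iterate_succ_apply] using mem_locS_iff.1 hy (n + 1)

lemma apply_mem_locU (hy : y ∈ locU φ x ε) (hdist : dist (φ x) (φ y) ≤ ε) :
    φ y ∈ locU φ (φ x) ε := by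
  refine mem_locU_iff.2 fun n => ?_
  cases n with
  | zero => exact hdist
  | succ n =>
    simpa only [Function.iterate_succ_apply, Homeomorph.symm_apply_apply]
      using mem_locU_iff.1 hy n

lemma isOpen_setOf_isSyncPt (φ : X ≃ₜ X) (ε₀ : ℝ) : IsOpen {x : X | IsSyncPt φ ε₀ x} :=
  isOpen_iff_mem_nhds.2 fun _ ⟨ε, hε, hεle, hx⟩ =>
    mem_of_superset ((continuous_id.prodMk continuous_id).continuousAt.preimage_mem_nhds
      (isOpen_interior.mem_nhds hx)) fun _ hy => ⟨ε, hε, hεle, hy⟩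

lemma IsAdapted.dist_apply_le (had : IsAdapted φ η lam) (hy : y ∈ locS φ x ε) (hε : ε ≤ η) :
    dist (φ x) (φ y) ≤ lam * ε := by
  obtain ⟨-, hlam, -, hcontract, -⟩ := had
  calc dist (φ x) (φ y) ≤ lam * dist x y := hcontract x y fun n => (hy n).trans hε
    _ ≤ lam * ε := by
      gcongr
      simpa using mem_locS_iff.1 hy 0

lemma IsAdapted.apply_mem_Dset (had : IsAdapted φ η lam) (hε : ε ≤ η)
    (hxy : (x, y) ∈ Dset φ ε) (hdist : dist (φ x) (φ y) ≤ (1 - lam) * ε) :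
    (φ x, φ y) ∈ Dset φ ε := by
  obtain ⟨z, hzS, hzU⟩ := hxy
  refine ⟨φ z, apply_mem_locS hzS, apply_mem_locU hzU ?_⟩
  calc dist (φ y) (φ z) ≤ dist (φ x) (φ y) + dist (φ x) (φ z) := dist_triangle_left _ _ _
    _ ≤ (1 - lam) * ε + lam * ε := add_le_add hdist (had.dist_apply_le hzS hε)
    _ = ε := by ring

lemma IsAdapted.isSyncPt_apply (had : IsAdapted φ η lam) (hε₀ : ε₀ ≤ η)
    (hx : IsSyncPt φ ε₀ x) : IsSyncPt φ ε₀ (φ x) := by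
  obtain ⟨ε, hε, hεle, hmem⟩ := hx
  refine ⟨ε, hε, hεle, mem_interior_iff_mem_nhds.2 ?_⟩
  have hpull : ∀ᶠ p in 𝓝 (φ x, φ x), (φ.symm p.1, φ.symm p.2) ∈ Dset φ ε := by
    have : Tendsto (Prod.map φ.symm φ.symm) (𝓝 (φ x, φ x)) (𝓝 (x, x)) := by
      simpa using (φ.symm.continuous.prodMap φ.symm.continuous).tendsto (φ x, φ x)
    exact this (mem_interior_iff_mem_nhds.1 hmem)
  have hclose : ∀ᶠ p in 𝓝 (φ x, φ x), dist p.1 p.2 < (1 - lam) * ε := by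
    refine (continuous_dist.tendsto (φ x, φ x)).eventually (gt_mem_nhds ?_)
    obtain ⟨-, -, hlam1, -⟩ := had
    simpa using mul_pos (sub_pos.2 hlam1) hε
  filter_upwards [hpull, hclose] with p hp hd
  simpa using had.apply_mem_Dset (hεle.trans hε₀) hp (by simpa using hd.le)

lemma Irred.dense_of_mapsTo (hirr : Irred φ) {S : Set X} (hS : IsOpen S) (hne : S.Nonempty)
    (hmaps : MapsTo φ S S) : Dense S := by
  refine dense_iff_inter_open.2 fun V hV hVne => ?_
  obtain ⟨n, -, _, ⟨s, hs, rfl⟩, hsV⟩ := hirr S V hS hV hne hVne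
  exact ⟨_, hsV, by rw [It_natCast]; exact hmaps.iterate n hs⟩

variable [CompactSpace X]

theorem syncPts_isOpen_dense_general (φ : X ≃ₜ X) (εX η lam : ℝ)
    (had : IsAdapted φ η lam) (hirr : Irred φ)
    (hsync : ∃ x : X, IsSyncPt φ (min η (εX / 2)) x) :
    IsOpen {x : X | IsSyncPt φ (min η (εX / 2)) x} ∧
      Dense {x : X | IsSyncPt φ (min η (εX / 2)) x} := by
  have hopen := isOpen_setOf_isSyncPt φ (min η (εX / 2))
  exact ⟨hopen, hirr.dense_of_mapsTo hopen hsync fun _ hx =>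
    had.isSyncPt_apply (min_le_left _ _) hx⟩

/-- in a synchronizing system, the synchronizing points form an
open dense set. -/
theorem syncPts_isOpen_dense (φ : X ≃ₜ X) (εX η lam : ℝ)
    (hexp : IsExpansive φ εX) (had : IsAdapted φ η lam) (hirr : Irred φ)
    (hsync : ∃ x : X, IsSyncPt φ (min η (εX / 2)) x) :
    IsOpen {x : X | IsSyncPt φ (min η (εX / 2)) x} ∧
      Dense {x : X | IsSyncPt φ (min η (εX / 2)) x} :=
  syncPts_isOpen_dense_general φ εX η lam had hirr hsync

end Paper
end

section
/- Let (X,φ) be an expansive dynamical system, x ∈ X, and p a synchronizing periodic point. If lim_{n→∞} d(φⁿ(x),φⁿ(p)) = 0 (stable equivalence), then x is synchronizing. The same conclusion holds if x is unstably equivalent, homoclinic, or locally conjugate to p. -/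
open Filter Topology Set

/-! In an adapted metric `φ⁻¹` contracts local unstable sets by `lam`, so `D_ε` is carried into
itself by `φ⁻¹ × φ⁻¹` at pairs whose images are `(1 - lam) ε`-close. Hence the set of points
synchronizing at a fixed scale `ε ≤ η` is open and invariant under `φ⁻¹`. If `x ∼ₛ p` and `p`
has period `r`, then `φ^{rm} x → p`, so some `φ^{rm} x` lies in this open set, and then so does
`x`. The unstable case is the stable case for `φ⁻¹`, which exchanges local stable and unstable
sets; local conjugacy implies stable equivalence. -/

namespace Paper

variable {X : Type*} [MetricSpace X]

section Iterates

variable (φ : X ≃ₜ X)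

lemma It_add_one_apply (n : ℤ) (x : X) : It φ (n + 1) x = It φ n (φ x) := by
  simp [It, zpow_add_one, Equiv.Perm.mul_apply]

lemma It_sub_one_apply (n : ℤ) (x : X) : It φ (n - 1) x = It φ n (φ.symm x) := by
  simp [It, zpow_sub_one, Equiv.Perm.mul_apply, Equiv.Perm.inv_def]

lemma It_symm (n : ℤ) : It φ.symm n = It φ (-n) := by
  ext x
  show (φ.toEquiv⁻¹ ^ n) x = (φ.toEquiv ^ (-n)) x
  rw [inv_zpow, zpow_neg]

lemma It_mul_apply_eq_self {r : ℤ} {p : X} (h : It φ r p = p) (m : ℤ) : It φ (r * m) p = p := by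
  simpa only [It, zpow_mul] using Equiv.Perm.zpow_apply_eq_self_of_apply_eq_self h m

end Iterates

section Orbits

variable {φ : X ≃ₜ X} {x p : X}

lemma IsPeriodic.symm (hp : IsPeriodic φ p) : IsPeriodic φ.symm p := by
  obtain ⟨r, hr, hrp⟩ := hp
  refine ⟨r, hr, ?_⟩
  simpa [It_symm] using It_mul_apply_eq_self φ hrp (-1)

lemma UnstableEq.stableEq_symm (h : UnstableEq φ x p) : StableEq φ.symm x p := by
  simpa [UnstableEq, StableEq, It_symm] using h

lemma LocConj.stableEq (h : LocConj φ x p) : StableEq φ x p := by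
  obtain ⟨U, -, γ, -, -, -, hxU, -, hγx, -, -, -, -, -, -, hasym⟩ := h
  refine Metric.tendsto_atTop.2 fun δ hδ => ?_
  obtain ⟨N, hN⟩ := hasym (δ / 2) (half_pos hδ)
  refine ⟨N, fun n hn => ?_⟩
  have hxn := hN n (by simpa using hn) x hxU
  rw [hγx] at hxn
  rw [Real.dist_0_eq_abs, abs_of_nonneg dist_nonneg]
  linarith

lemma StableEq.mem_of_isPeriodic {S : Set X} (h : StableEq φ x p) (hS : IsOpen S)
    (hback : ∀ (n : ℕ) (z : X), It φ n z ∈ S → z ∈ S) (hp : IsPeriodic φ p) (hpS : p ∈ S) :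
    x ∈ S := by
  obtain ⟨r, hr, hrp⟩ := hp
  have hmul : Tendsto (fun m : ℕ => r * m) atTop atTop := tendsto_id.const_mul_atTop' hr
  have hlim : Tendsto (fun m : ℕ => It φ (r * m : ℕ) x) atTop (𝓝 p) := by
    refine tendsto_iff_dist_tendsto_zero.2 ?_
    simpa [Function.comp_def, It_mul_apply_eq_self φ hrp] using h.comp hmul
  obtain ⟨m, hm⟩ := (hlim.eventually (hS.mem_nhds hpS)).exists
  exact hback _ _ hm

end Orbits

section Symmetry

variable (φ : X ≃ₜ X) (ε : ℝ)

lemma locS_symm (x : X) : locS φ.symm x ε = locU φ x ε := by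
  simp [locS, locU, It_symm]

lemma locU_symm (x : X) : locU φ.symm x ε = locS φ x ε := by
  simp [locS, locU, It_symm]

lemma Dset_symm : Dset φ.symm ε = Prod.swap ⁻¹' Dset φ ε := by
  ext ⟨a, b⟩
  simp [Dset, locS_symm, locU_symm, inter_comm]

end Symmetry

lemma IsAdapted.symm {φ : X ≃ₜ X} {η lam : ℝ} (h : IsAdapted φ η lam) :
    IsAdapted φ.symm η lam := by
  obtain ⟨hη, hlam, hlam1, hS, hU⟩ := h
  refine ⟨hη, hlam, hlam1, fun x y hy => ?_, fun x y hy => ?_⟩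
  · exact hU x y (by rwa [locS_symm] at hy)
  · exact hS x y (by rwa [locU_symm] at hy)

section Synchronizing

variable {φ : X ≃ₜ X} {η lam ε : ℝ} {x p : X}

lemma symm_mem_Dset (had : IsAdapted φ η lam) (hεη : ε ≤ η) {a b : X} (hab : (a, b) ∈ Dset φ ε)
    (hd : dist (φ.symm a) (φ.symm b) ≤ (1 - lam) * ε) : (φ.symm a, φ.symm b) ∈ Dset φ ε := by
  obtain ⟨-, hlam, -, -, hcontr⟩ := had
  obtain ⟨w, hwS, hwU⟩ := hab
  refine ⟨φ.symm w, ?_, fun n => ?_⟩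
  · rintro (_ | n)
    · have hbw : dist (φ.symm b) (φ.symm w) ≤ lam * dist b w :=
        hcontr b w fun n => (hwU n).trans hεη
      have hbw' : dist b w ≤ ε := hwU 0
      calc dist (φ.symm a) (φ.symm w)
          ≤ dist (φ.symm a) (φ.symm b) + dist (φ.symm b) (φ.symm w) := dist_triangle _ _ _
        _ ≤ (1 - lam) * ε + lam * ε := by nlinarith
        _ = ε := by ring
    · simpa [It_add_one_apply] using hwS n
  · simpa [← It_sub_one_apply, sub_eq_add_neg, add_comm] using hwU (n + 1)

def syncSet (φ : X ≃ₜ X) (ε : ℝ) : Set X := {z | (z, z) ∈ interior (Dset φ ε)}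

lemma isOpen_syncSet : IsOpen (syncSet φ ε) :=
  isOpen_interior.preimage (continuous_id.prodMk continuous_id)

lemma syncSet_symm : syncSet φ.symm ε = syncSet φ ε := by
  ext z
  rw [syncSet, Dset_symm, ← Homeomorph.coe_prodComm, ← Homeomorph.preimage_interior]
  rfl

lemma symm_mem_syncSet (had : IsAdapted φ η lam) (hε : 0 < ε) (hεη : ε ≤ η) {y : X}
    (hy : y ∈ syncSet φ ε) : φ.symm y ∈ syncSet φ ε := by
  have hpush : Prod.map φ φ ⁻¹' Dset φ ε ∈ 𝓝 (φ.symm y, φ.symm y) :=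
    (φ.continuous.prodMap φ.continuous).continuousAt.preimage_mem_nhds
      (by simpa using mem_interior_iff_mem_nhds.1 hy)
  have hnear : {q : X × X | dist q.1 q.2 < (1 - lam) * ε} ∈ 𝓝 (φ.symm y, φ.symm y) :=
    (isOpen_lt (continuous_fst.dist continuous_snd) continuous_const).mem_nhds
      (by simpa using mul_pos (sub_pos.2 had.2.2.1) hε)
  refine mem_interior_iff_mem_nhds.2 ?_
  filter_upwards [hpush, hnear] with ⟨a, b⟩ hab hd
  simpa using symm_mem_Dset had hεη hab (by simpa using hd.le)

lemma mem_syncSet_of_It_mem (had : IsAdapted φ η lam) (hε : 0 < ε) (hεη : ε ≤ η) (n : ℕ)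
    (hx : It φ n x ∈ syncSet φ ε) : x ∈ syncSet φ ε := by
  induction n generalizing x with
  | zero => exact hx
  | succ n ih =>
    have hφx := ih (x := φ x) (by simpa [It_add_one_apply] using hx)
    simpa using symm_mem_syncSet had hε hεη hφx

lemma mem_syncSet_of_stableEq (had : IsAdapted φ η lam) (hε : 0 < ε) (hεη : ε ≤ η)
    (h : StableEq φ x p) (hp : IsPeriodic φ p) (hpS : p ∈ syncSet φ ε) : x ∈ syncSet φ ε :=
  h.mem_of_isPeriodic isOpen_syncSet (fun n _ => mem_syncSet_of_It_mem had hε hεη n) hp hpS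

lemma mem_syncSet_of_unstableEq (had : IsAdapted φ η lam) (hε : 0 < ε) (hεη : ε ≤ η)
    (h : UnstableEq φ x p) (hp : IsPeriodic φ p) (hpS : p ∈ syncSet φ ε) : x ∈ syncSet φ ε := by
  rw [← syncSet_symm] at hpS ⊢
  exact mem_syncSet_of_stableEq had.symm hε hεη h.stableEq_symm hp.symm hpS

end Synchronizing

variable [CompactSpace X]

theorem eq_to_sync_periodic_implies_sync_general (φ : X ≃ₜ X) (εX η lam : ℝ)
    (had : IsAdapted φ η lam) (x p : X)
    (hp : IsPeriodic φ p) (hps : IsSyncPt φ (min η (εX / 2)) p) :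
    (StableEq φ x p → IsSyncPt φ (min η (εX / 2)) x) ∧
    (UnstableEq φ x p → IsSyncPt φ (min η (εX / 2)) x) ∧
    (StableEq φ x p ∧ UnstableEq φ x p → IsSyncPt φ (min η (εX / 2)) x) ∧
    (LocConj φ x p → IsSyncPt φ (min η (εX / 2)) x) := by
  obtain ⟨ε, hε, hεle, hpS⟩ := hps
  have hεη : ε ≤ η := hεle.trans (min_le_left _ _)
  have of_stable (h : StableEq φ x p) : IsSyncPt φ (min η (εX / 2)) x :=
    ⟨ε, hε, hεle, mem_syncSet_of_stableEq had hε hεη h hp hpS⟩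
  have of_unstable (h : UnstableEq φ x p) : IsSyncPt φ (min η (εX / 2)) x :=
    ⟨ε, hε, hεle, mem_syncSet_of_unstableEq had hε hεη h hp hpS⟩
  exact ⟨of_stable, of_unstable, fun h => of_stable h.1, fun h => of_stable h.stableEq⟩

/-- a point stably (or unstably, homoclinically, locally
conjugately) equivalent to a synchronizing periodic point is synchronizing. -/
theorem eq_to_sync_periodic_implies_sync (φ : X ≃ₜ X) (εX η lam : ℝ)
    (hexp : IsExpansive φ εX) (had : IsAdapted φ η lam) (x p : X)
    (hp : IsPeriodic φ p) (hps : IsSyncPt φ (min η (εX / 2)) p) :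
    (StableEq φ x p → IsSyncPt φ (min η (εX / 2)) x) ∧
    (UnstableEq φ x p → IsSyncPt φ (min η (εX / 2)) x) ∧
    (StableEq φ x p ∧ UnstableEq φ x p → IsSyncPt φ (min η (εX / 2)) x) ∧
    (LocConj φ x p → IsSyncPt φ (min η (εX / 2)) x) :=
  eq_to_sync_periodic_implies_sync_general φ εX η lam had x p hp hps

end Paper
end
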